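/- arXiv:2601.20584 — 2 statements merged into one kernel-verified Lean document; each statement's English description precedes it below -/
import Mathlib

section
/- Let M be a compact metric space and φ : ℝ × M → M a continuous flow on M (φ continuous, φ(0,·) = id, φ(t+s,·) = φ(t,·) ∘ φ(s,·)); write φ^t(x) = φ(t,x). Assume the flow has no rest points, i.e. for every p ∈ M there exists t ∈ ℝ with φ^t(p) ≠ p. Then there exists s > 0 such that for every p ∈ M and every real T with 0 < T < s one has φ^T(p) ≠ p; equivalently, the infimum of the set { T > 0 : there exists p ∈ M with φ^T(p) = p } is at least s, hence positive. -/
/-- The claim inside Lemma 6.4: for a rest-point-free continuous flow on a compact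
metric space, the infimum of positive periods of periodic points is positive. -/
theorem exists_pos_lower_bound_on_periods {M : Type*} [MetricSpace M] [CompactSpace M]
    (φ : ℝ → M → M)
    (hcont : Continuous fun q : ℝ × M => φ q.1 q.2)
    (hφ0 : ∀ x, φ 0 x = x)
    (hφadd : ∀ t s x, φ (t + s) x = φ t (φ s x))
    (hnorest : ∀ p : M, ∃ t : ℝ, φ t p ≠ p) :
    ∃ s : ℝ, 0 < s ∧ ∀ p : M, ∀ T : ℝ, 0 < T → T < s → φ T p ≠ p := by
  -- integer multiples of a period are periods
  have hnat : ∀ (q : M) (T : ℝ), φ T q = q → ∀ n : ℕ, φ (n * T) q = q := by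
    intro q T h n
    induction n with
    | zero => simpa using hφ0 q
    | succ n ih =>
      have : ((n : ℝ) + 1) * T = (n : ℝ) * T + T := by ring
      rw [Nat.cast_succ, this, hφadd, h, ih]
  have hinv : ∀ (s : ℝ) (x : M), φ (-s) (φ s x) = x := by
    intro s x
    rw [← hφadd, neg_add_cancel, hφ0]
  have hint : ∀ (q : M) (T : ℝ), φ T q = q → ∀ k : ℤ, φ (k * T) q = q := by
    intro q T h k
    cases k with
    | ofNat n => simpa using hnat q T h n
    | negSucc n =>
      have hn := hnat q T h (n + 1)
      push_cast at hn
      have hn' : φ (((n : ℝ) + 1) * T) q = q := hn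
      have heq : ((Int.negSucc n : ℤ) : ℝ) * T = -(((n : ℝ) + 1) * T) := by
        push_cast; ring
      rw [heq]
      calc φ (-(((n : ℝ) + 1) * T)) q
          = φ (-(((n : ℝ) + 1) * T)) (φ (((n : ℝ) + 1) * T) q) := by rw [hn']
        _ = q := hinv _ _
  by_contra hc
  push_neg at hc
  -- choose p_n, T_n with 0 < T_n < 1/(n+1), φ T_n p_n = p_n
  have hseq : ∀ n : ℕ, ∃ p : M, ∃ T : ℝ, 0 < T ∧ T < 1 / (n + 1) ∧ φ T p = p := by
    intro n
    obtain ⟨p, T, hT0, hTs, hp⟩ := hc (1 / (n + 1)) (by positivity)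
    exact ⟨p, T, hT0, hTs, hp⟩
  choose p T hT0 hTlt hper using hseq
  obtain ⟨a, -, ψ, hψ, hconv⟩ := isCompact_univ.tendsto_subseq (x := p) (fun n => trivial)
  have hT0' : Filter.Tendsto (fun n => T (ψ n)) Filter.atTop (nhds 0) := by
    have h1 : Filter.Tendsto (fun n : ℕ => 1 / ((ψ n : ℝ) + 1)) Filter.atTop (nhds 0) := by
      apply Filter.Tendsto.comp (g := fun n : ℕ => 1 / ((n : ℝ) + 1))
        tendsto_one_div_add_atTop_nhds_zero_nat hψ.tendsto_atTop
    exact squeeze_zero (fun n => (hT0 (ψ n)).le) (fun n => (hTlt (ψ n)).le) h1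
  -- show a is a rest point
  have hrest : ∀ t : ℝ, φ t a = a := by
    intro t
    set r : ℕ → ℝ := fun n => t - ⌊t / T (ψ n)⌋ * T (ψ n) with hr
    have hphir : ∀ n, φ t (p (ψ n)) = φ (r n) (p (ψ n)) := by
      intro n
      have : t = r n + ⌊t / T (ψ n)⌋ * T (ψ n) := by simp [hr]
      rw [this, hφadd, hint _ _ (hper (ψ n))]
    have hr0 : ∀ n, 0 ≤ r n := by
      intro n
      have := Int.sub_floor_div_mul_nonneg t (hT0 (ψ n))
      simpa [hr] using this
    have hrlt : ∀ n, r n < T (ψ n) := by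
      intro n
      have := Int.sub_floor_div_mul_lt t (hT0 (ψ n))
      simpa [hr] using this
    have hrtend : Filter.Tendsto r Filter.atTop (nhds 0) :=
      squeeze_zero hr0 (fun n => (hrlt n).le) hT0'
    have h1 : Filter.Tendsto (fun n => φ t (p (ψ n))) Filter.atTop (nhds (φ t a)) := by
      have := hcont.tendsto (t, a)
      exact this.comp ((tendsto_const_nhds.prodMk_nhds hconv))
    have h2 : Filter.Tendsto (fun n => φ (r n) (p (ψ n))) Filter.atTop (nhds (φ 0 a)) := by
      have := hcont.tendsto (0, a)
      exact this.comp (hrtend.prodMk_nhds hconv)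
    rw [hφ0] at h2
    have : Filter.Tendsto (fun n => φ t (p (ψ n))) Filter.atTop (nhds a) := by
      simpa only [hphir] using h2
    exact tendsto_nhds_unique h1 this
  obtain ⟨t, ht⟩ := hnorest a
  exact ht (hrest t)
end

section
/- Let M be a compact metric space and φ : ℝ × M → M a continuous flow on M (φ continuous, φ(0,·) = id, φ(t+s,·) = φ(t,·) ∘ φ(s,·)); write φ^t(x) = φ(t,x). Assume the flow has no rest points, i.e. for every p ∈ M there exists t ∈ ℝ with φ^t(p) ≠ p. Then there exists ε > 0 such that for every x ∈ M and all t₁, t₂ ∈ (−ε, ε), the equality φ^{t₁}(x) = φ^{t₂}(x) implies t₁ = t₂; that is, for every x the orbit map t ↦ φ^t(x) is injective on the interval (−ε, ε), with ε uniform in x. -/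
/-!
If `φ^t(p) ≠ p`, then `φ^r(y) ≠ y` for all `r` near `t` and `y` near `p`. The periods of `y` form
a subgroup of `ℝ`, so a nonzero period `s` of `y` has a multiple within `|s|` of `t`; hence points
near `p` have no nonzero periods shorter than some `δ > 0`, and compactness makes `δ` uniform.
Finally, `φ^{t₁}(x) = φ^{t₂}(x)` makes `t₂ - t₁` a period of `φ^{t₁}(x)`.
-/

open Filter Topology

theorem AddSubgroup.exists_mem_abs_sub_lt_abs {G : Type*} [AddCommGroup G] [LinearOrder G]
    [IsOrderedAddMonoid G] [Archimedean G] (S : AddSubgroup G) {s : G} (hs : s ∈ S)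
    (hs0 : s ≠ 0) (t : G) : ∃ u ∈ S, |u - t| < |s| := by
  obtain ⟨m, ⟨hm_nonneg, hm_lt⟩, -⟩ := existsUnique_sub_zsmul_mem_Ico (abs_pos.2 hs0) t 0
  refine ⟨m • |s|, S.zsmul_mem (abs_mem_iff.2 hs) m, ?_⟩
  rw [abs_sub_comm, abs_of_nonneg hm_nonneg]
  simpa using hm_lt

section Flow

variable {M : Type*} [TopologicalSpace M] [T2Space M] [AddAction ℝ M] [ContinuousVAdd ℝ M]

theorem eventually_vadd_eq_self_eq_zero {p : M} {t : ℝ} (ht : t +ᵥ p ≠ p) :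
    ∀ᶠ q : ℝ × M in 𝓝 (0, p), q.1 +ᵥ q.2 = q.2 → q.1 = 0 := by
  have hopen : IsOpen {q : ℝ × M | q.1 +ᵥ q.2 ≠ q.2} :=
    isOpen_ne_fun continuous_vadd continuous_snd
  obtain ⟨U, hU, V, hV, hUV⟩ := mem_nhds_prod_iff.1 (hopen.mem_nhds ht)
  obtain ⟨δ, hδ, hball⟩ := Metric.mem_nhds_iff.1 hU
  filter_upwards [prod_mem_nhds (Metric.ball_mem_nhds 0 hδ) hV] with ⟨s, y⟩ ⟨hs, hy⟩ hper
  by_contra hs0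
  obtain ⟨u, hu, hut⟩ := (AddAction.stabilizer ℝ y).exists_mem_abs_sub_lt_abs hper hs0 t
  have hs_lt : |s| < δ := by simpa using hs
  have hu_ball : u ∈ Metric.ball t δ := by
    rw [Metric.mem_ball, Real.dist_eq]
    exact hut.trans hs_lt
  exact hUV (Set.mk_mem_prod (hball hu_ball) hy) hu

theorem exists_pos_forall_vadd_eq_self_eq_zero [CompactSpace M]
    (h : ∀ p : M, ∃ t : ℝ, t +ᵥ p ≠ p) :
    ∃ ε > 0, ∀ y : M, ∀ s : ℝ, |s| < ε → s +ᵥ y = y → s = 0 := by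
  have hunif : ∀ᶠ s : ℝ in 𝓝 0, ∀ y ∈ (Set.univ : Set M), s +ᵥ y = y → s = 0 :=
    isCompact_univ.eventually_forall_of_forall_eventually fun p _ =>
      eventually_vadd_eq_self_eq_zero (h p).choose_spec
  obtain ⟨ε, hε, hball⟩ := Metric.eventually_nhds_iff.1 hunif
  exact ⟨ε, hε, fun y s hs => hball (by simpa using hs) y trivial⟩

end Flow

/-- Uniform local injectivity of orbit maps (uniqueness statement in the proof of
Lemma 6.4): for a rest-point-free continuous flow on a compact metric space there is
`ε > 0`, uniform in `x`, such that `t ↦ φ t x` is injective on `(-ε, ε)`. -/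
theorem orbit_map_locally_injective {M : Type*} [MetricSpace M] [CompactSpace M]
    (φ : ℝ → M → M)
    (hcont : Continuous fun q : ℝ × M => φ q.1 q.2)
    (hφ0 : ∀ x, φ 0 x = x)
    (hφadd : ∀ t s x, φ (t + s) x = φ t (φ s x))
    (hnorest : ∀ p : M, ∃ t : ℝ, φ t p ≠ p) :
    ∃ ε : ℝ, 0 < ε ∧ ∀ x : M, ∀ t₁ ∈ Set.Ioo (-ε) ε, ∀ t₂ ∈ Set.Ioo (-ε) ε,
      φ t₁ x = φ t₂ x → t₁ = t₂ := by
  let _ : AddAction ℝ M := { vadd := φ, zero_vadd := hφ0, add_vadd := hφadd }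
  have _ : ContinuousVAdd ℝ M := ⟨hcont⟩
  obtain ⟨ε, hε, hgap⟩ := exists_pos_forall_vadd_eq_self_eq_zero hnorest
  refine ⟨ε / 2, half_pos hε, fun x t₁ ht₁ t₂ ht₂ heq => ?_⟩
  have hper : φ (t₂ - t₁) (φ t₁ x) = φ t₁ x := by
    rw [← hφadd, sub_add_cancel, heq]
  have hdiff : |t₂ - t₁| < ε :=
    abs_sub_lt_iff.2 ⟨by linarith [ht₁.1, ht₂.2], by linarith [ht₁.2, ht₂.1]⟩
  linarith [hgap _ _ hdiff hper]
end
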